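/- arXiv:1408.2608 — 4 statements merged into one kernel-verified Lean document; each statement's English description precedes it below -/
import Mathlib

section
/- Let n ≥ 400, x, H be positive integers with H/x ≤ (17n)^(−1/3). Let q, q', b, ε₂ satisfy n/x² = b/q + ε₂/(q·q') with 0 < q ≤ 4H ≤ q' and |ε₂| < 1, and let a = [q·n/x] (nearest integer) with ε₁ = q·n/x − a, so |ε₁| ≤ 1/2. Define ε(h) = ε₁ − h·ε₂/q' + q·n·h²/((x+h)·x²). Then for every integer h with |h| ≤ H, |ε(h)| < 1. -/
set_option maxHeartbeats 1000000


theorem stmt_2 (n x H : ℕ) (hn : 400 ≤ n) (hx : 0 < x) (hH : 0 < H)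
    (hHx : (H : ℝ) / (x : ℝ) ≤ (17 * (n : ℝ)) ^ (-(1 : ℝ) / 3))
    (b q q' a : ℤ) (ε₁ ε₂ : ℝ)
    (hq : 0 < q) (hq4H : q ≤ 4 * (H : ℤ)) (hq' : 4 * (H : ℤ) ≤ q')
    (hε₂ : |ε₂| < 1)
    (hcf : (n : ℝ) / (x : ℝ) ^ 2 = (b : ℝ) / (q : ℝ) + ε₂ / ((q : ℝ) * (q' : ℝ)))
    (hε₁def : ε₁ = (q : ℝ) * (n : ℝ) / (x : ℝ) - (a : ℝ))
    (hε₁ : |ε₁| ≤ 1 / 2) :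
    ∀ h : ℤ, |h| ≤ (H : ℤ) →
      |ε₁ - (h : ℝ) * ε₂ / (q' : ℝ) +
        (q : ℝ) * (n : ℝ) * (h : ℝ) ^ 2 / (((x : ℝ) + (h : ℝ)) * (x : ℝ) ^ 2)| < 1 := by
  intro h hh
  have hx' : (0:ℝ) < x := by exact_mod_cast hx
  have hn' : (400:ℝ) ≤ n := by exact_mod_cast hn
  have hH' : (0:ℝ) < H := by exact_mod_cast hH
  set t : ℝ := (17 * (n : ℝ)) ^ (-(1 : ℝ) / 3) with ht
  have hnpos : (0:ℝ) < 17 * n := by linarith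
  clear_value t
  have htpos : 0 < t := by
    rw [ht]; exact Real.rpow_pos_of_pos hnpos _
  have ht3 : t ^ 3 = 1 / (17 * (n:ℝ)) := by
    rw [ht, ← Real.rpow_natCast ((17 * (n:ℝ)) ^ (-(1:ℝ)/3)) 3,
      ← Real.rpow_mul (le_of_lt hnpos)]
    norm_num
    rw [Real.rpow_neg_one, mul_inv]
    ring
  have ht17 : t ≤ 1 / 17 := by
    by_contra hc
    push_neg at hc
    have h1 : ((1:ℝ)/17)^3 < t^3 := by gcongr <;> norm_num
    rw [ht3] at h1
    have h2 : 1/(17*(n:ℝ)) ≤ 1/4913 :=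
      one_div_le_one_div_of_le (by norm_num) (by linarith)
    have h3 : ((1:ℝ)/17)^3 = 1/4913 := by norm_num
    linarith
  have hHt : (H:ℝ) ≤ t * x := by
    rw [div_le_iff₀ hx'] at hHx
    linarith
  have hHx17 : (H:ℝ) ≤ x / 17 := by nlinarith [hHt, ht17, hx']
  have habs : |(h:ℝ)| ≤ (H:ℝ) := by
    have : ((|h| : ℤ) : ℝ) ≤ ((H:ℤ) : ℝ) := by exact_mod_cast hh
    simpa using this
  have hxh : (16/17) * (x:ℝ) ≤ (x:ℝ) + (h:ℝ) := by
    have := neg_abs_le (h:ℝ)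
    linarith
  have hDge : (16/17) * (x:ℝ)^3 ≤ ((x:ℝ) + (h:ℝ)) * (x:ℝ)^2 := by
    nlinarith [mul_le_mul_of_nonneg_right hxh (sq_nonneg (x:ℝ))]
  have hDpos : 0 < ((x:ℝ) + (h:ℝ)) * (x:ℝ)^2 := lt_of_lt_of_le (by positivity) hDge
  have hqr : (q:ℝ) ≤ 4 * H := by exact_mod_cast hq4H
  have hqpos : (0:ℝ) < q := by exact_mod_cast hq
  have hq'r : (4:ℝ) * H ≤ q' := by exact_mod_cast hq'
  have hq'pos : (0:ℝ) < q' := by linarith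
  have hh2 : (h:ℝ)^2 ≤ (H:ℝ)^2 :=
    sq_le_sq' (by linarith [neg_abs_le (h:ℝ)]) (by linarith [le_abs_self (h:ℝ)])
  have hH3 : (H:ℝ)^3 ≤ (t*x)^3 := by
    gcongr

  have hH3' : 17 * (n:ℝ) * (H:ℝ)^3 ≤ (x:ℝ)^3 := by
    have htx : (t*x)^3 = (x:ℝ)^3 / (17 * n) := by
      rw [mul_pow, ht3]; ring
    rw [htx] at hH3
    rw [le_div_iff₀ hnpos] at hH3
    linarith
  have hNle : (q:ℝ) * n * (h:ℝ)^2 ≤ 4 * (x:ℝ)^3 / 17 := by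
    have s1 : (q:ℝ) * (h:ℝ)^2 ≤ 4 * H * (H:ℝ)^2 :=
      mul_le_mul hqr hh2 (sq_nonneg _) (by positivity)
    have s2 := mul_le_mul_of_nonneg_left s1 (by linarith : (0:ℝ) ≤ (n:ℝ))
    linarith [s2, hH3']
  have B3 : |(q:ℝ) * (n:ℝ) * (h:ℝ)^2 / (((x:ℝ) + (h:ℝ)) * (x:ℝ)^2)| ≤ 1/4 := by
    rw [abs_of_nonneg (div_nonneg (by positivity) (le_of_lt hDpos))]
    rw [div_le_iff₀ hDpos]
    linarith [hNle, hDge]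
  rcases eq_or_ne h 0 with rfl | hne
  · simp only [Int.cast_zero, zero_mul, zero_div, sub_zero, ne_eq, OfNat.ofNat_ne_zero,
      not_false_eq_true, zero_pow, mul_zero, add_zero]
    calc |ε₁| ≤ 1/2 := hε₁
      _ < 1 := by norm_num
  · have h1le : (1:ℝ) ≤ |(h:ℝ)| := by
      have : (1:ℤ) ≤ |h| := Int.one_le_abs (by simpa using hne)
      have : ((1:ℤ):ℝ) ≤ ((|h|:ℤ):ℝ) := by exact_mod_cast this
      simpa using this
    have B2 : |(h:ℝ) * ε₂ / q'| < 1/4 := by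
      rw [abs_div, abs_mul, abs_of_pos hq'pos, div_lt_iff₀ hq'pos]
      nlinarith [abs_nonneg ε₂, h1le, habs, hε₂, hq'r]
    have key : |ε₁ + (-(((h:ℝ) * ε₂) / q')) +
        (q:ℝ) * (n:ℝ) * (h:ℝ)^2 / (((x:ℝ) + (h:ℝ)) * (x:ℝ)^2)| ≤
        |ε₁| + |(-(((h:ℝ) * ε₂) / q'))| +
        |(q:ℝ) * (n:ℝ) * (h:ℝ)^2 / (((x:ℝ) + (h:ℝ)) * (x:ℝ)^2)| := abs_add_three _ _ _
    rw [abs_neg] at key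
    have heq : ε₁ - (h:ℝ) * ε₂ / q' +
        (q:ℝ) * (n:ℝ) * (h:ℝ)^2 / (((x:ℝ) + (h:ℝ)) * (x:ℝ)^2)
        = ε₁ + (-(((h:ℝ) * ε₂) / q')) +
        (q:ℝ) * (n:ℝ) * (h:ℝ)^2 / (((x:ℝ) + (h:ℝ)) * (x:ℝ)^2) := by ring
    rw [heq]
    calc |ε₁ + (-(((h:ℝ) * ε₂) / q')) +
        (q:ℝ) * (n:ℝ) * (h:ℝ)^2 / (((x:ℝ) + (h:ℝ)) * (x:ℝ)^2)| ≤
        |ε₁| + |((h:ℝ) * ε₂) / q'| +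
        |(q:ℝ) * (n:ℝ) * (h:ℝ)^2 / (((x:ℝ) + (h:ℝ)) * (x:ℝ)^2)| := key
      _ < 1 := by linarith
end

section
/- Let n ≥ 400, x, H be positive integers with H/x ≤ (17n)^(−1/3). With q, q', b, ε₂ as in the continued-fraction approximation n/x² = b/q + ε₂/(q·q') (0 < q ≤ 4H ≤ q', |ε₂| < 1), a = [q·n/x], ε₁ = q·n/x − a, define the quadratic polynomial g(y) = (q·n − a·x) + (b·x − a)·y + b·y². If an integer h with |h| ≤ H satisfies (x+h) ∣ n, then g(h) = 0. -/
theorem stmt_5 (n x H : ℕ) (hn : 400 ≤ n) (hx : 0 < x) (hH : 0 < H)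
    (hHx : (H : ℝ) / (x : ℝ) ≤ (17 * (n : ℝ)) ^ (-(1 : ℝ) / 3))
    (b q q' a : ℤ) (ε₁ ε₂ : ℝ)
    (hq : 0 < q) (hq4H : q ≤ 4 * (H : ℤ)) (hq' : 4 * (H : ℤ) ≤ q')
    (hε₂ : |ε₂| < 1)
    (hcf : (n : ℝ) / (x : ℝ) ^ 2 = (b : ℝ) / (q : ℝ) + ε₂ / ((q : ℝ) * (q' : ℝ)))
    (hε₁def : ε₁ = (q : ℝ) * (n : ℝ) / (x : ℝ) - (a : ℝ))
    (hε₁ : |ε₁| ≤ 1 / 2) :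
    ∀ h : ℤ, |h| ≤ (H : ℤ) → ((x : ℤ) + h) ∣ (n : ℤ) →
      (q * (n : ℤ) - a * (x : ℤ)) + (b * (x : ℤ) - a) * h + b * h ^ 2 = 0 := by
  intro h hhH hdvd
  have hx0 : (0:ℝ) < x := by exact_mod_cast hx
  have hH0 : (0:ℝ) < H := by exact_mod_cast hH
  have hnR : (400:ℝ) ≤ n := by exact_mod_cast hn
  have hn0 : (0:ℝ) < 17 * n := by linarith
  -- cube inequality : 17 n H^3 ≤ x^3
  have hcube : 17 * (n:ℝ) * (H:ℝ)^3 ≤ (x:ℝ)^3 := by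
    have h1 : ((H:ℝ)/x)^3 ≤ ((17*(n:ℝ)) ^ (-(1:ℝ)/3))^3 :=
      pow_le_pow_left₀ (by positivity) hHx 3
    rw [← Real.rpow_natCast ((17*(n:ℝ)) ^ (-(1:ℝ)/3)) 3, ← Real.rpow_mul hn0.le] at h1
    norm_num at h1
    rw [Real.rpow_neg_one, div_pow, div_le_iff₀ (by positivity)] at h1
    have h2 := mul_le_mul_of_nonneg_left h1 hn0.le
    rw [mul_inv_cancel_left₀ (ne_of_gt hn0)] at h2
    linarith
  -- 18 H ≤ x
  have h18 : 18 * (H:ℝ) ≤ (x:ℝ) := by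
    have h3 : (18 * (H:ℝ))^3 ≤ (x:ℝ)^3 := by nlinarith [pow_pos hH0 3]
    have := (pow_le_pow_iff_left₀ (by positivity) hx0.le (by norm_num)).mp h3
    linarith
  have h18z : 18 * (H:ℤ) ≤ (x:ℤ) := by exact_mod_cast h18
  have hhlo : -(H:ℤ) ≤ h := (abs_le.mp hhH).1
  have hxh : (0:ℤ) < (x:ℤ) + h := by linarith
  have hxhR : (0:ℝ) < (x:ℝ) + (h:ℝ) := by exact_mod_cast hxh
  have hq'0 : (0:ℤ) < q' := by linarith
  have hqR : (0:ℝ) < (q:ℝ) := by exact_mod_cast hq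
  have hq'R : (0:ℝ) < (q':ℝ) := by exact_mod_cast hq'0
  -- factor g(h) = (x+h) * m
  obtain ⟨k, hk⟩ := hdvd
  obtain ⟨m, hmdef⟩ : ∃ m : ℤ, m = q * k + b * h - a := ⟨_, rfl⟩
  have hm : (q * (n : ℤ) - a * (x : ℤ)) + (b * (x : ℤ) - a) * h + b * h ^ 2
      = ((x:ℤ) + h) * m := by rw [hmdef, hk]; ring
  -- solve hcf for ε₂
  have hε₂eq : ε₂ = (q:ℝ) * q' * n / (x:ℝ)^2 - b * q' := by
    field_simp at hcf ⊢
    have key : (q:ℝ) * ((x:ℝ)^2 * ε₂) = q * ((q':ℝ) * ((n:ℝ)*q - (x:ℝ)^2*b)) := by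
      linear_combination -(q:ℝ) * hcf
    exact mul_left_cancel₀ (ne_of_gt hqR) key
  -- real expression for m
  have hmR : (m:ℝ) = ε₁ - h * ε₂ / q' + q * n * h^2 / (((x:ℝ)+h) * (x:ℝ)^2) := by
    have hmcast : ((x:ℝ) + h) * m
        = (q:ℝ) * n - a * x + ((b:ℝ) * x - a) * h + b * (h:ℝ)^2 := by
      exact_mod_cast congrArg (fun z : ℤ => (z:ℝ)) hm.symm
    rw [hε₁def, hε₂eq]
    have hxh0 : ((x:ℝ)+h) ≠ 0 := ne_of_gt hxhR
    have hm' : (m:ℝ) = ((q:ℝ) * n - a * x + ((b:ℝ) * x - a) * h + b * (h:ℝ)^2) / ((x:ℝ) + h) := by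
      rw [eq_div_iff hxh0]; linarith [hmcast]
    rw [hm']
    field_simp
    ring
  -- bounds
  have habsh : |(h:ℝ)| ≤ (H:ℝ) := by exact_mod_cast hhH
  have ht2 : |(h:ℝ) * ε₂ / q'| ≤ 1/4 := by
    rw [abs_div, abs_mul, abs_of_pos hq'R, div_le_iff₀ hq'R]
    have hq'H : 4 * (H:ℝ) ≤ q' := by exact_mod_cast hq'
    have hmul := mul_le_mul habsh hε₂.le (abs_nonneg ε₂) hH0.le
    linarith
  have ht3 : |(q:ℝ) * n * h^2 / (((x:ℝ)+h) * (x:ℝ)^2)| ≤ 72/289 := by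
    have hqH : (q:ℝ) ≤ 4 * H := by exact_mod_cast hq4H
    have hh2 : (h:ℝ)^2 ≤ (H:ℝ)^2 := by nlinarith [sq_abs (h:ℝ), abs_nonneg (h:ℝ)]
    have hnn : (0:ℝ) ≤ (n:ℝ) := by positivity
    have e0 : (n:ℝ) * (h:ℝ)^2 ≤ (n:ℝ) * (H:ℝ)^2 := mul_le_mul_of_nonneg_left hh2 hnn
    have e1 : (q:ℝ) * ((n:ℝ) * (h:ℝ)^2) ≤ (4*(H:ℝ)) * ((n:ℝ) * (H:ℝ)^2) :=
      mul_le_mul hqH e0 (by positivity) (by positivity)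
    have hhR : -(H:ℝ) ≤ (h:ℝ) := by exact_mod_cast hhlo
    have hxhge : (17/18) * (x:ℝ) ≤ (x:ℝ) + h := by linarith
    have e2 : (17/18) * (x:ℝ) * (x:ℝ)^2 ≤ ((x:ℝ)+h) * (x:ℝ)^2 :=
      mul_le_mul_of_nonneg_right hxhge (sq_nonneg _)
    have hd0 : (0:ℝ) < ((x:ℝ)+h) * (x:ℝ)^2 := mul_pos hxhR (by positivity)
    have hnum0 : (0:ℝ) ≤ (q:ℝ) * n * (h:ℝ)^2 :=
      mul_nonneg (mul_nonneg hqR.le hnn) (sq_nonneg _)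
    rw [abs_of_nonneg (div_nonneg hnum0 hd0.le), div_le_iff₀ hd0]
    linarith [e1, e2, hcube]
  have hmlt : |(m:ℝ)| < 1 := by
    rw [hmR]
    have t1 := abs_add_le (ε₁ - h * ε₂ / q') ((q:ℝ) * n * h^2 / (((x:ℝ)+h) * (x:ℝ)^2))
    have t2 := abs_sub ε₁ ((h:ℝ) * ε₂ / q')
    linarith
  have hm0 : m = 0 := by
    have hcast : |m| < 1 := by
      have : |(m:ℝ)| < 1 := hmlt
      rw [← Int.cast_abs] at this
      exact_mod_cast this
    rw [abs_lt] at hcast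
    omega
  rw [hm, hm0, mul_zero]
end

section
/- Let n ≥ 400, x, H be positive integers with H/x ≤ (17n)^(−1/3) and x − H ≥ 2. Then the number of divisors d of n with x − H ≤ d ≤ x + H is at most 2. -/
set_option maxHeartbeats 1600000 in
private lemma aux_three (n x H a b c : ℕ) (hn : 400 ≤ n) (hH : 0 < H)
    (hcube : 17 * (n : ℝ) * (H : ℝ) ^ 3 ≤ (x : ℝ) ^ 3)
    (hxH : H + 2 ≤ x)
    (ha : a ∣ n) (hb : b ∣ n) (hc : c ∣ n)
    (hab : a < b) (hbc : b < c)
    (halo : x - H ≤ a) (hchi : c ≤ x + H) : False := by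
  have hn0 : 0 < n := by omega
  have hHlex : H ≤ x := by omega
  have ha0 : 0 < a := by omega
  have hb0 : 0 < b := by omega
  have hc0 : 0 < c := by omega
  set e1 := n / a with he1
  set e2 := n / b with he2
  set e3 := n / c with he3
  have hA : (a : ℤ) * e1 = n := by exact_mod_cast Nat.mul_div_cancel' ha
  have hB : (b : ℤ) * e2 = n := by exact_mod_cast Nat.mul_div_cancel' hb
  have hC : (c : ℤ) * e3 = n := by exact_mod_cast Nat.mul_div_cancel' hc
  set D : ℤ := (a : ℤ) * e2 - a * e3 - e1 * b + e1 * c + b * e3 - c * e2 with hD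
  have hdet : D * ((a : ℤ) * b * c) =
      (n : ℤ) * ((b : ℤ) - a) * ((c : ℤ) - a) * ((c : ℤ) - b) := by
    rw [hD]
    linear_combination ((a : ℤ)^2*c - a*c^2) * hB + ((a:ℤ)*b^2 - a^2*b) * hC
      + ((b:ℤ)*c^2 - b^2*c) * hA
  have hrpos : (0 : ℤ) < (n : ℤ) * ((b : ℤ) - a) * ((c : ℤ) - a) * ((c : ℤ) - b) := by
    have h1 : (0:ℤ) < (b:ℤ) - a := sub_pos.mpr (by exact_mod_cast hab)
    have h2 : (0:ℤ) < (c:ℤ) - a := by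
      have : a < c := lt_trans hab hbc
      exact sub_pos.mpr (by exact_mod_cast this)
    have h3 : (0:ℤ) < (c:ℤ) - b := sub_pos.mpr (by exact_mod_cast hbc)
    have h4 : (0:ℤ) < (n:ℤ) := by exact_mod_cast hn0
    positivity
  have habc : (0 : ℤ) < (a : ℤ) * b * c := by
    have h4 : (0:ℤ) < (a:ℤ) := by exact_mod_cast ha0
    have h5 : (0:ℤ) < (b:ℤ) := by exact_mod_cast hb0
    have h6 : (0:ℤ) < (c:ℤ) := by exact_mod_cast hc0
    positivity
  have hD1 : 1 ≤ D := by
    by_contra hcon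
    push_neg at hcon
    have : D ≤ 0 := by omega
    nlinarith [hdet, hrpos, habc]
  have hkey : ((a : ℤ) * b * c) ≤ (n : ℤ) * ((b : ℤ) - a) * ((c : ℤ) - a) * ((c : ℤ) - b) := by
    nlinarith [hdet, habc, hD1]
  -- move to ℝ
  have hkeyR : ((a : ℝ) * b * c) ≤ (n : ℝ) * ((b : ℝ) - a) * ((c : ℝ) - a) * ((c : ℝ) - b) := by
    exact_mod_cast hkey
  have hcastsub : ((x - H : ℕ) : ℝ) = (x : ℝ) - H := by
    push_cast [Nat.cast_sub hHlex]; ring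
  have haR : (x : ℝ) - H ≤ a := by
    rw [← hcastsub]; exact_mod_cast halo
  have hcR : (c : ℝ) ≤ (x : ℝ) + H := by exact_mod_cast hchi
  have habR : (a : ℝ) < b := by exact_mod_cast hab
  have hbcR : (b : ℝ) < c := by exact_mod_cast hbc
  have hH1 : (1 : ℝ) ≤ H := by exact_mod_cast hH
  have hx2 : (H : ℝ) + 2 ≤ x := by exact_mod_cast hxH
  have hn400 : (400 : ℝ) ≤ n := by exact_mod_cast hn
  -- (b-a)(c-b) ≤ H^2 since (b-a)+(c-b) = c-a ≤ 2H
  have hca : (c : ℝ) - a ≤ 2 * H := by linarith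
  have hprod : ((b : ℝ) - a) * ((c : ℝ) - b) ≤ (H : ℝ) ^ 2 := by
    nlinarith [sq_nonneg ((c : ℝ) - a - 2 * H), sq_nonneg (((b:ℝ) - a) - ((c:ℝ) - b))]
  have h2n : ((a : ℝ) * b * c) ≤ 2 * n * (H : ℝ) ^ 3 := by
    have hn0R : (0 : ℝ) ≤ n := by positivity
    have h1 : (0:ℝ) ≤ (b:ℝ) - a := le_of_lt (by linarith)
    have h2 : (0:ℝ) ≤ (c:ℝ) - b := le_of_lt (by linarith)
    have h3 : (0:ℝ) ≤ (c:ℝ) - a := by linarith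
    calc ((a : ℝ) * b * c) ≤ (n : ℝ) * ((b : ℝ) - a) * ((c : ℝ) - a) * ((c : ℝ) - b) := hkeyR
      _ = (n : ℝ) * (((b : ℝ) - a) * ((c : ℝ) - b)) * ((c : ℝ) - a) := by ring
      _ ≤ (n : ℝ) * (H : ℝ) ^ 2 * (2 * H) := by
          apply mul_le_mul
          · exact mul_le_mul_of_nonneg_left hprod hn0R
          · exact hca
          · exact h3
          · positivity
      _ = 2 * n * (H : ℝ) ^ 3 := by ring
  have hxmH : (0 : ℝ) < (x : ℝ) - H := by linarith
  have hlow : ((x : ℝ) - H) ^ 3 ≤ (a : ℝ) * b * c := by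
    have h1 : (x : ℝ) - H ≤ a := haR
    have h2 : (x : ℝ) - H ≤ b := by linarith
    have h3 : (x : ℝ) - H ≤ c := by linarith
    calc ((x : ℝ) - H) ^ 3 = ((x:ℝ)-H) * ((x:ℝ)-H) * ((x:ℝ)-H) := by ring
      _ ≤ (a : ℝ) * b * c := by
          apply mul_le_mul
          · exact mul_le_mul h1 h2 (le_of_lt hxmH) (by linarith)
          · exact h3
          · exact le_of_lt hxmH
          · positivity
  -- so (x-H)^3 ≤ 2 n H^3, while 17 n H^3 ≤ x^3 and n ≥ 400
  have hmain : 17 * ((x : ℝ) - H) ^ 3 ≤ 2 * (x : ℝ) ^ 3 := by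
    nlinarith [hlow, h2n, hcube]
  have h6800 : 6800 * (H : ℝ) ^ 3 ≤ (x : ℝ) ^ 3 := by
    nlinarith [hcube, pow_pos (show (0:ℝ) < H by linarith) 3]
  have hH18 : 18 * (H : ℝ) ≤ x := by
    by_contra hcon
    push_neg at hcon
    have hlt : ((x : ℝ)) ^ 3 < (18 * H) ^ 3 := by
      apply pow_lt_pow_left₀ hcon (by positivity)
      norm_num
    nlinarith [hlt, h6800]
  have hx0 : (0 : ℝ) < x := by linarith
  have h78 : (17 * (x : ℝ) / 18) ^ 3 ≤ ((x : ℝ) - H) ^ 3 := by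
    apply pow_le_pow_left₀ (by positivity)
    linarith
  nlinarith [hmain, h78, pow_pos hx0 3]

theorem stmt_8 (n x H : ℕ) (hn : 400 ≤ n) (hx : 0 < x) (hH : 0 < H)
    (hHx : (H : ℝ) / (x : ℝ) ≤ (17 * (n : ℝ)) ^ (-(1 : ℝ) / 3))
    (hxH : H + 2 ≤ x) :
    ((n.divisors).filter (fun d => x - H ≤ d ∧ d ≤ x + H)).card ≤ 2 := by
  have hn0 : 0 < n := by omega
  have hx0 : (0 : ℝ) < x := by exact_mod_cast hx
  have h17n : (0 : ℝ) < 17 * (n : ℝ) := by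
    have : (0:ℝ) < n := by exact_mod_cast hn0
    linarith
  -- derive 17 n H^3 ≤ x^3
  have hcube : 17 * (n : ℝ) * (H : ℝ) ^ 3 ≤ (x : ℝ) ^ 3 := by
    have h1 : (H : ℝ) ≤ (17 * (n : ℝ)) ^ (-(1 : ℝ) / 3) * x := by
      rw [div_le_iff₀ hx0] at hHx
      exact hHx
    have hHnn : (0:ℝ) ≤ H := by positivity
    have h2 : (H : ℝ) ^ 3 ≤ ((17 * (n : ℝ)) ^ (-(1 : ℝ) / 3) * x) ^ 3 :=
      pow_le_pow_left₀ hHnn h1 3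
    have h3 : ((17 * (n : ℝ)) ^ (-(1 : ℝ) / 3)) ^ (3:ℕ) = (17 * (n : ℝ))⁻¹ := by
      rw [← Real.rpow_natCast ((17 * (n : ℝ)) ^ (-(1 : ℝ) / 3)) 3,
        ← Real.rpow_mul (le_of_lt h17n)]
      rw [show (-(1:ℝ)/3) * ((3:ℕ):ℝ) = -1 by push_cast; ring, Real.rpow_neg_one]
    have h4 : (H : ℝ) ^ 3 ≤ (17 * (n : ℝ))⁻¹ * (x:ℝ) ^ 3 := by
      calc (H : ℝ) ^ 3 ≤ ((17 * (n : ℝ)) ^ (-(1 : ℝ) / 3) * x) ^ 3 := h2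
        _ = ((17 * (n : ℝ)) ^ (-(1 : ℝ) / 3)) ^ (3:ℕ) * (x:ℝ)^3 := by ring
        _ = (17 * (n : ℝ))⁻¹ * (x:ℝ) ^ 3 := by rw [h3]
    calc 17 * (n : ℝ) * (H : ℝ) ^ 3 ≤ 17 * (n : ℝ) * ((17 * (n : ℝ))⁻¹ * (x:ℝ) ^ 3) :=
          mul_le_mul_of_nonneg_left h4 (le_of_lt h17n)
      _ = (x:ℝ) ^ 3 := by field_simp
  by_contra hcon
  push_neg at hcon
  rw [Finset.two_lt_card] at hcon
  obtain ⟨a, hamem, b, hbmem, c, hcmem, hab, hac, hbc⟩ := hcon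
  simp only [Finset.mem_filter, Nat.mem_divisors] at hamem hbmem hcmem
  obtain ⟨⟨hadvd, -⟩, halo, hahi⟩ := hamem
  obtain ⟨⟨hbdvd, -⟩, hblo, hbhi⟩ := hbmem
  obtain ⟨⟨hcdvd, -⟩, hclo, hchi⟩ := hcmem
  rcases lt_trichotomy a b with h1 | h1 | h1
  · rcases lt_trichotomy b c with h2 | h2 | h2
    · exact aux_three n x H a b c hn hH hcube hxH hadvd hbdvd hcdvd h1 h2 halo hchi
    · exact hbc h2
    · rcases lt_trichotomy a c with h3 | h3 | h3
      · exact aux_three n x H a c b hn hH hcube hxH hadvd hcdvd hbdvd h3 h2 halo hbhi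
      · exact hac h3
      · exact aux_three n x H c a b hn hH hcube hxH hcdvd hadvd hbdvd h3 h1 hclo hbhi
  · exact hab h1
  · rcases lt_trichotomy a c with h2 | h2 | h2
    · exact aux_three n x H b a c hn hH hcube hxH hbdvd hadvd hcdvd h1 h2 hblo hchi
    · exact hac h2
    · rcases lt_trichotomy b c with h3 | h3 | h3
      · exact aux_three n x H b c a hn hH hcube hxH hbdvd hcdvd hadvd h3 h2 hblo hahi
      · exact hbc h3
      · exact aux_three n x H c b a hn hH hcube hxH hcdvd hbdvd hadvd h3 h1 hclo hahi
end

section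
/- Define sequences x₁ = ⌈(17n)^(1/3)⌉ + 2, H₁ = 1, and for j ≥ 2, x_j = x_{j−1} + 2·H_{j−1} + 1 with H_j = ⌊(17n)^(−1/3)·x_j⌋, for a fixed integer n ≥ 400. Then the sequence (H_j) is nondecreasing, and the intervals [2, ⌈(17n)^(1/3)⌉] ∪ ⋃_{j=1}^{J} [x_j − H_j, x_j + H_j] cover the interval [2, x_J] of integers for every J ≥ 1. -/
theorem stmt_10 (n : ℕ) (hn : 400 ≤ n) (x H : ℕ → ℕ)
    (hx1 : (x 1 : ℤ) = ⌈(17 * (n : ℝ)) ^ ((1 : ℝ) / 3)⌉ + 2) (hH1 : H 1 = 1)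
    (hxrec : ∀ j : ℕ, 2 ≤ j → x j = x (j - 1) + 2 * H (j - 1) + 1)
    (hHrec : ∀ j : ℕ, 2 ≤ j → (H j : ℤ) = ⌊(17 * (n : ℝ)) ^ (-(1 : ℝ) / 3) * (x j : ℝ)⌋) :
    (∀ j : ℕ, 1 ≤ j → H j ≤ H (j + 1)) ∧
      ∀ J : ℕ, 1 ≤ J → ∀ m : ℤ, 2 ≤ m → m ≤ (x J : ℤ) →
        (m ≤ ⌈(17 * (n : ℝ)) ^ ((1 : ℝ) / 3)⌉ ∨
          ∃ j : ℕ, 1 ≤ j ∧ j ≤ J ∧ (x j : ℤ) - (H j : ℤ) ≤ m ∧ m ≤ (x j : ℤ) + (H j : ℤ)) := by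
  have hnr : (400 : ℝ) ≤ (n : ℝ) := by exact_mod_cast hn
  have h17 : (0 : ℝ) < 17 * (n : ℝ) := by nlinarith
  set c : ℝ := (17 * (n : ℝ)) ^ ((1 : ℝ) / 3) with hc
  set α : ℝ := (17 * (n : ℝ)) ^ (-(1 : ℝ) / 3) with hα
  have hc0 : 0 < c := Real.rpow_pos_of_pos h17 _
  have hα0 : 0 < α := Real.rpow_pos_of_pos h17 _
  have hmul : α * c = 1 := by
    rw [hα, hc, ← Real.rpow_add h17]
    norm_num
  have hx2 : x 2 = x 1 + 2 * H 1 + 1 := hxrec 2 le_rfl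
  have hH2 : 1 ≤ H 2 := by
    have h2 : (H 2 : ℤ) = ⌊α * (x 2 : ℝ)⌋ := hHrec 2 le_rfl
    have hx2z : (x 2 : ℤ) = ⌈c⌉ + 5 := by
      have h : (x 2 : ℤ) = (x 1 : ℤ) + 2 * (H 1 : ℤ) + 1 := by exact_mod_cast hx2
      rw [h, hx1, hH1]; ring
    have hcx : c ≤ (x 2 : ℝ) := by
      have h1 : c ≤ (⌈c⌉ : ℝ) := Int.le_ceil c
      have h2' : ((x 2 : ℤ) : ℝ) = ((⌈c⌉ : ℤ) : ℝ) + 5 := by exact_mod_cast hx2z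
      push_cast at h2'
      linarith
    have hge : (1 : ℝ) ≤ α * (x 2 : ℝ) := by
      calc (1 : ℝ) = α * c := hmul.symm
        _ ≤ α * (x 2 : ℝ) := by nlinarith
    have hfl : (1 : ℤ) ≤ ⌊α * (x 2 : ℝ)⌋ := Int.le_floor.mpr (by exact_mod_cast hge)
    have : (1 : ℤ) ≤ (H 2 : ℤ) := by rw [h2]; exact hfl
    exact_mod_cast this
  have hmono : ∀ j : ℕ, 1 ≤ j → H j ≤ H (j + 1) := by
    intro j hj
    rcases eq_or_lt_of_le hj with h1 | h2
    · rw [← h1, hH1]; exact hH2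
    · have hj2 : 2 ≤ j := h2
      have hjr : (H j : ℤ) = ⌊α * (x j : ℝ)⌋ := hHrec j hj2
      have hj1r : (H (j + 1) : ℤ) = ⌊α * (x (j + 1) : ℝ)⌋ := hHrec (j + 1) (by omega)
      have hxj : x (j + 1) = x j + 2 * H j + 1 := by
        have h := hxrec (j + 1) (by omega)
        simpa using h
      have hxle : (x j : ℝ) ≤ (x (j + 1) : ℝ) := by
        have : x j ≤ x (j + 1) := by omega
        exact_mod_cast this
      have : (H j : ℤ) ≤ (H (j + 1) : ℤ) := by
        rw [hjr, hj1r]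
        exact Int.floor_le_floor (by nlinarith)
      exact_mod_cast this
  refine ⟨hmono, ?_⟩
  intro J hJ
  induction J, hJ using Nat.le_induction with
  | base =>
    intro m hm2 hmx
    by_cases hc' : m ≤ ⌈c⌉
    · left; exact hc'
    · right
      push_neg at hc'
      refine ⟨1, le_rfl, le_rfl, ?_, ?_⟩
      · rw [hx1, hH1]; push_cast; linarith
      · have : (0 : ℤ) ≤ (H 1 : ℤ) := by positivity
        linarith
  | succ J hJ1 IH =>
    intro m hm2 hmx
    have hxJ : x (J + 1) = x J + 2 * H J + 1 := by
      have h := hxrec (J + 1) (by omega)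
      simpa using h
    by_cases hle : m ≤ (x J : ℤ)
    · rcases IH m hm2 hle with h | ⟨j, hj1, hjJ, hl, hr⟩
      · left; exact h
      · right; exact ⟨j, hj1, by omega, hl, hr⟩
    · right
      push_neg at hle
      by_cases hmid : m ≤ (x J : ℤ) + (H J : ℤ)
      · refine ⟨J, hJ1, by omega, ?_, hmid⟩
        have : (0 : ℤ) ≤ (H J : ℤ) := by positivity
        linarith
      · push_neg at hmid
        refine ⟨J + 1, by omega, le_rfl, ?_, ?_⟩
        · have hm : (H J : ℤ) ≤ (H (J + 1) : ℤ) := by exact_mod_cast hmono J hJ1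
          have hxz : (x (J + 1) : ℤ) = (x J : ℤ) + 2 * (H J : ℤ) + 1 := by exact_mod_cast hxJ
          omega
        · have : (0 : ℤ) ≤ (H (J + 1) : ℤ) := by positivity
          linarith
end
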